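/- For k in the range 1 ≤ k ≤ m, one has Σ_{k=1}^{m} (1 - cos(2kπ/n)) ≥ K₁ (m³/n² - m⁵/n⁴) for some absolute constant K₁ > 0, whenever 2mπ/n ≤ π. -/
import Mathlib


open Real Finset

lemma cube_le_three_sum_sq (m : ℕ) : (m:ℝ)^3 ≤ 3 * ∑ k ∈ Finset.Icc 1 m, (k:ℝ)^2 := by
  induction m with
  | zero => simp
  | succ m ih =>
    rw [Finset.sum_Icc_succ_top (by omega)]
    push_cast
    nlinarith [ih, Nat.cast_nonneg (α := ℝ) m]

/-- `∑_{k=1}^m (1 - cos(2kπ/n)) ≥ K₁ (m³/n² - m⁵/n⁴)` for an absolute constant `K₁ > 0`,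
whenever `2mπ/n ≤ π`. -/
theorem sum_one_sub_cos_lower_bound :
    ∃ K₁ > (0:ℝ), ∀ m n : ℕ, 0 < m → 2 * m ≤ n →
      ∑ k ∈ Finset.Icc 1 m, (1 - Real.cos (2 * k * π / n)) ≥
        K₁ * ((m : ℝ) ^ 3 / (n : ℝ) ^ 2 - (m : ℝ) ^ 5 / (n : ℝ) ^ 4) := by
  refine ⟨1, one_pos, fun m n hm hmn => ?_⟩
  have hn : (0:ℝ) < n := by
    have : 0 < n := by omega
    exact_mod_cast this
  have hmn' : (m:ℝ) * 2 ≤ n := by exact_mod_cast by omega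
  -- termwise bound: 1 - cos(2kπ/n) ≥ 8 k²/n²
  have hterm : ∀ k ∈ Finset.Icc 1 m,
      (8:ℝ) * (k:ℝ)^2 / (n:ℝ)^2 ≤ 1 - Real.cos (2 * k * π / n) := by
    intro k hk
    simp only [Finset.mem_Icc] at hk
    have hk1 : (1:ℝ) ≤ k := by exact_mod_cast hk.1
    have hkm : (k:ℝ) ≤ m := by exact_mod_cast hk.2
    have hx0 : (0:ℝ) ≤ 2 * k * π / n := by positivity
    have hxpi : 2 * k * π / n ≤ π := by
      rw [div_le_iff₀ hn]
      nlinarith [pi_pos]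
    have habs : |2 * k * π / n| ≤ π := by rwa [abs_of_nonneg hx0]
    have := Real.cos_le_one_sub_mul_cos_sq habs
    have hpi := pi_pos
    have hkey : 2 / π ^ 2 * (2 * k * π / n) ^ 2 = 8 * (k:ℝ)^2 / (n:ℝ)^2 := by
      field_simp
      ring
    linarith [hkey ▸ this]
  have hsum : ∑ k ∈ Finset.Icc 1 m, (8:ℝ) * (k:ℝ)^2 / (n:ℝ)^2 ≤
      ∑ k ∈ Finset.Icc 1 m, (1 - Real.cos (2 * k * π / n)) :=
    Finset.sum_le_sum hterm
  have h2 : ∑ k ∈ Finset.Icc 1 m, (8:ℝ) * (k:ℝ)^2 / (n:ℝ)^2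
      = (8 / (n:ℝ)^2) * ∑ k ∈ Finset.Icc 1 m, (k:ℝ)^2 := by
    rw [Finset.mul_sum]; congr 1 with k; ring
  have h3 := cube_le_three_sum_sq m
  have hn2 : (0:ℝ) < (n:ℝ)^2 := by positivity
  have h5 : (0:ℝ) ≤ (m:ℝ)^5 / (n:ℝ)^4 := by positivity
  have h4 : (m:ℝ)^3 / (n:ℝ)^2 ≤ (8 / (n:ℝ)^2) * ∑ k ∈ Finset.Icc 1 m, (k:ℝ)^2 := by
    rw [div_le_iff₀ hn2]
    have heq : (8 / (n:ℝ)^2 * ∑ k ∈ Finset.Icc 1 m, (k:ℝ)^2) * (n:ℝ)^2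
        = 8 * ∑ k ∈ Finset.Icc 1 m, (k:ℝ)^2 := by field_simp
    have hsumpos : (0:ℝ) ≤ ∑ k ∈ Finset.Icc 1 m, (k:ℝ)^2 :=
      Finset.sum_nonneg fun k _ => by positivity
    rw [heq]; linarith
  linarith
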